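/- arXiv:gr-qc/0506039 — 7 statements merged into one kernel-verified Lean document; each statement's English description precedes it below -/
import Mathlib

section
/- Let ℓ ≥ 1 be a natural number, let n = (2ℓ+1)³, and let Q(ℓ) = (∏_{{x,y}} |x − y|)^{2/n²}, where the product runs over all unordered pairs of distinct points of the lattice cube L_ℓ. Then Q(ℓ)/ℓ ≥ e^{−1/3}, i.e. Q(ℓ) ≥ e^{−1/3}·ℓ. -/
open Finset

/-- The point of `ℝ³` (with the Euclidean metric) corresponding to an integer triple. -/
noncomputable def pt (i : ℤ × ℤ × ℤ) : EuclideanSpace ℝ (Fin 3) :=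
  (WithLp.equiv 2 (Fin 3 → ℝ)).symm ![(i.1 : ℝ), (i.2.1 : ℝ), (i.2.2 : ℝ)]

/-- The lattice cube `L_ℓ`: integer triples `(i₁,i₂,i₃)` with `1 ≤ i₁,i₂,i₃ ≤ 2ℓ+1`. -/
noncomputable def latticeCube (ℓ : ℕ) : Finset (ℤ × ℤ × ℤ) :=
  Finset.Icc 1 (2 * (ℓ : ℤ) + 1) ×ˢ Finset.Icc 1 (2 * (ℓ : ℤ) + 1) ×ˢ
    Finset.Icc 1 (2 * (ℓ : ℤ) + 1)

/-- The product of the Euclidean distances `|x − y|` over all unordered pairs `{x, y}` of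
distinct points of the lattice cube `L_ℓ`. -/
noncomputable def pairProd (ℓ : ℕ) : ℝ :=
  ∏ p ∈ (latticeCube ℓ).sym2.filter (fun p => ¬ p.IsDiag),
    Sym2.lift ⟨fun x y => dist (pt x) (pt y), fun _ _ => dist_comm _ _⟩ p

/-- `Q(ℓ)`: the `2/n²`-th power of the product of distances over all unordered pairs of
distinct points of `L_ℓ`, where `n = (2ℓ+1)³`. -/
noncomputable def Q (ℓ : ℕ) : ℝ :=
  pairProd ℓ ^ ((2 : ℝ) / (((2 * ℓ + 1) ^ 3 : ℕ) : ℝ) ^ 2)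


/-!
Since `log 0 = 0`, `log Q(ℓ)` is the mean of `log |x - y|` over all ordered pairs of points of
the cube, `N = 2ℓ + 1` points per side. For an integer vector `(a, b, c)`, AM–GM gives
`log |(a, b, c)| ≥ (log |a| + log |b| + log |c|) / 3 + (log 3) / 2` when `abc ≠ 0`, and the same
without the constant otherwise. Summed over pairs, this lower bound factorizes into the
one-dimensional sum `∑_{i,j ≤ N} log |i - j| = 2 ∑_{m < N} log m!`, which is compared with
integrals of `log` and of its antiderivative `t log t - t` (the comparisons are done
algebraically, from `log x ≤ (x - x⁻¹) / 2`). What remains is an explicit inequality in `ℓ`.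
-/

namespace LatticeCube

open Real Finset

lemma log_le_sub_inv_div_two {x : ℝ} (hx : 1 ≤ x) : log x ≤ (x - x⁻¹) / 2 := by
  rcases hx.eq_or_lt with rfl | hx
  · simp
  · have h := self_lt_sinh_iff.mpr (log_pos hx)
    rw [sinh_log (by linarith)] at h
    exact h.le

lemma two_mul_mul_mul_log_sub_log_le {x y : ℝ} (hy : 0 < y) (hxy : y ≤ x) :
    2 * x * y * (log x - log y) ≤ x ^ 2 - y ^ 2 := by
  have hx : 0 < x := hy.trans_le hxy
  have h := log_le_sub_inv_div_two ((one_le_div hy).mpr hxy)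
  rw [log_div hx.ne' hy.ne', inv_div, div_sub_div _ _ hy.ne' hx.ne', div_div,
    le_div_iff₀ (by positivity)] at h
  nlinarith

noncomputable def logAntideriv (t : ℝ) : ℝ := t * log t - t

noncomputable def logAntideriv₂ (t : ℝ) : ℝ := t ^ 2 / 2 * log t - 3 / 4 * t ^ 2

lemma logAntideriv_sub_le_log {t : ℝ} (ht : 1 ≤ t) :
    logAntideriv (t + 1 / 2) - logAntideriv (t - 1 / 2) ≤ log t := by
  have h₁ := two_mul_mul_mul_log_sub_log_le (by linarith : (0 : ℝ) < t)
    (by linarith : t ≤ t + 1 / 2)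
  have h₂ := two_mul_mul_mul_log_sub_log_le (by linarith : (0 : ℝ) < t - 1 / 2)
    (by linarith : t - 1 / 2 ≤ t)
  unfold logAntideriv
  nlinarith

lemma logAntideriv₂_sub_le_logAntideriv {t : ℝ} (ht : 5 / 2 ≤ t) :
    logAntideriv₂ t - logAntideriv₂ (t - 1) ≤ logAntideriv t := by
  have h₁ := two_mul_mul_mul_log_sub_log_le (by linarith : (0 : ℝ) < t - 1)
    (by linarith : t - 1 ≤ t)
  have h₂ : 1 - t⁻¹ ≤ log t := one_sub_inv_le_log_of_pos (by linarith)
  have h₃ : t * (1 - t⁻¹) = t - 1 := by field_simp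
  unfold logAntideriv logAntideriv₂
  nlinarith [mul_le_mul_of_nonneg_left h₁ (by linarith : (0 : ℝ) ≤ t - 1),
    mul_le_mul_of_nonneg_left h₂ (by linarith : (0 : ℝ) ≤ t)]

lemma logAntideriv_sub_le_sum_log (N : ℕ) :
    logAntideriv (N + 1 / 2) - logAntideriv (1 / 2) ≤ ∑ d ∈ range N, log (d + 1 : ℝ) := by
  induction N with
  | zero => simp
  | succ N ih =>
    have h := logAntideriv_sub_le_log (by linarith [N.cast_nonneg (α := ℝ)] : (1 : ℝ) ≤ N + 1)
    rw [sum_range_succ]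
    push_cast
    ring_nf at h ih ⊢
    linarith

/-- `Real.log` is even and vanishes at `0`, so this is `∑_{i ≠ j} log |i - j|`. -/
noncomputable def logGapSum (N : ℕ) : ℝ := ∑ i ∈ range N, ∑ j ∈ range N, log ((i : ℝ) - j)

lemma logGapSum_succ (N : ℕ) :
    logGapSum (N + 1) = logGapSum N + 2 * ∑ d ∈ range N, log (d + 1 : ℝ) := by
  have hrow : ∑ j ∈ range N, log ((N : ℝ) - j) = ∑ d ∈ range N, log (d + 1 : ℝ) := by
    rw [← sum_range_reflect]
    refine sum_congr rfl fun j hj => ?_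
    rw [Nat.sub_sub, Nat.cast_sub (by simp at hj; omega)]
    push_cast
    ring_nf
  have hcol : ∑ i ∈ range N, log ((i : ℝ) - N) = ∑ j ∈ range N, log ((N : ℝ) - j) :=
    sum_congr rfl fun j _ => by rw [← log_neg_eq_log, neg_sub]
  simp only [logGapSum, sum_range_succ, sub_self, log_zero, add_zero, sum_add_distrib, hcol, hrow]
  ring

lemma logGapSum_ge {N : ℕ} (hN : 2 ≤ N) :
    2 * (logAntideriv₂ (N - 1 / 2) - logAntideriv₂ (3 / 2) - (N - 2) * logAntideriv (1 / 2))
      ≤ logGapSum N := by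
  induction N, hN using Nat.le_induction with
  | base => norm_num [logGapSum, sum_range_succ]
  | succ N hN ih =>
    have hN' : (2 : ℝ) ≤ N := by exact_mod_cast hN
    have h₁ := logAntideriv_sub_le_sum_log N
    have h₂ := logAntideriv₂_sub_le_logAntideriv (by linarith : (5 / 2 : ℝ) ≤ N + 1 / 2)
    rw [logGapSum_succ]
    push_cast
    ring_nf at h₁ h₂ ih ⊢
    linarith

lemma sum_sum_log_sub_Icc_eq_logGapSum (N : ℕ) :
    ∑ i ∈ Icc (1 : ℤ) N, ∑ j ∈ Icc (1 : ℤ) N, log ((i - j : ℤ) : ℝ) = logGapSum N := by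
  simp [Int.Icc_eq_finset_map, sum_map, logGapSum]

lemma twenty_seven_mul_mul_mul_le_add_add_pow_three {u v w : ℝ} (hu : 0 ≤ u) (hv : 0 ≤ v)
    (hw : 0 ≤ w) : 27 * (u * v * w) ≤ (u + v + w) ^ 3 := by
  nlinarith [mul_nonneg hu (sq_nonneg (v - w)), mul_nonneg hv (sq_nonneg (u - w)),
    mul_nonneg hw (sq_nonneg (u - v)), mul_nonneg (add_nonneg (add_nonneg hu hv) hw)
      (add_nonneg (add_nonneg (sq_nonneg (u - v)) (sq_nonneg (v - w))) (sq_nonneg (u - w)))]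

lemma log_intCast_le_half_log {a s : ℤ} (h : a ^ 2 ≤ s) : log (a : ℝ) ≤ log (s : ℝ) / 2 := by
  rcases eq_or_ne a 0 with rfl | ha
  · rw [Int.cast_zero, log_zero]
    positivity
  · have := log_le_log (by positivity) (by exact_mod_cast h : ((a : ℝ) ^ 2) ≤ s)
    rw [log_pow] at this
    push_cast at this
    linarith

noncomputable def nonzeroIndicator (z : ℤ) : ℝ := if z = 0 then 0 else 1

lemma log_add_log_add_log_le (a b c : ℤ) :
    (log (a : ℝ) + log (b : ℝ) + log (c : ℝ)) / 3
        + log 3 / 2 * (nonzeroIndicator a * nonzeroIndicator b * nonzeroIndicator c)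
      ≤ log ((a ^ 2 + b ^ 2 + c ^ 2 : ℤ) : ℝ) / 2 := by
  by_cases habc : a ≠ 0 ∧ b ≠ 0 ∧ c ≠ 0
  · obtain ⟨ha, hb, hc⟩ := habc
    simp only [nonzeroIndicator, ha, hb, hc, if_false, mul_one]
    have h := log_le_log (by positivity) (twenty_seven_mul_mul_mul_le_add_add_pow_three
      (sq_nonneg (a : ℝ)) (sq_nonneg (b : ℝ)) (sq_nonneg (c : ℝ)))
    rw [log_mul (by positivity) (by positivity), log_mul (by positivity) (by positivity),
      log_mul (by positivity) (by positivity), log_pow, log_pow, log_pow, log_pow,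
      show (27 : ℝ) = 3 ^ 3 by norm_num, log_pow] at h
    push_cast at h ⊢
    linarith
  · have h0 : nonzeroIndicator a * nonzeroIndicator b * nonzeroIndicator c = 0 := by
      simp only [nonzeroIndicator]
      split_ifs <;> simp_all
    have ha := log_intCast_le_half_log (by nlinarith : a ^ 2 ≤ a ^ 2 + b ^ 2 + c ^ 2)
    have hb := log_intCast_le_half_log (by nlinarith : b ^ 2 ≤ a ^ 2 + b ^ 2 + c ^ 2)
    have hc := log_intCast_le_half_log (by nlinarith : c ^ 2 ≤ a ^ 2 + b ^ 2 + c ^ 2)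
    rw [h0]
    linarith

lemma dist_pt (x y : ℤ × ℤ × ℤ) :
    dist (pt x) (pt y)
      = √(((x.1 - y.1) ^ 2 + (x.2.1 - y.2.1) ^ 2 + (x.2.2 - y.2.2) ^ 2 : ℤ) : ℝ) := by
  rw [EuclideanSpace.dist_eq, Fin.sum_univ_three]
  simp [pt, Real.dist_eq, sq_abs]

lemma pt_injective : Function.Injective pt := by
  intro x y h
  have h0 := congrArg (fun v => v 0) h
  have h1 := congrArg (fun v => v 1) h
  have h2 := congrArg (fun v => v 2) h
  simp only [pt, WithLp.equiv_symm_apply, Fin.isValue, Matrix.cons_val_zero, Matrix.cons_val_one,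
    Matrix.cons_val, Int.cast_inj] at h0 h1 h2
  exact Prod.ext h0 (Prod.ext h1 h2)

lemma log_dist_pt_ge (x y : ℤ × ℤ × ℤ) :
    (log ((x.1 - y.1 : ℤ) : ℝ) + log ((x.2.1 - y.2.1 : ℤ) : ℝ)
          + log ((x.2.2 - y.2.2 : ℤ) : ℝ)) / 3
        + log 3 / 2 * (nonzeroIndicator (x.1 - y.1) * nonzeroIndicator (x.2.1 - y.2.1)
          * nonzeroIndicator (x.2.2 - y.2.2))
      ≤ log (dist (pt x) (pt y)) := by
  rw [dist_pt, log_sqrt (by positivity)]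
  exact log_add_log_add_log_le _ _ _

lemma sum_sum_mul_mul_of_product {α β γ : Type*} (A : Finset α) (B : Finset β) (C : Finset γ)
    (f : α → α → ℝ) (g : β → β → ℝ) (h : γ → γ → ℝ) :
    ∑ x ∈ A ×ˢ B ×ˢ C, ∑ y ∈ A ×ˢ B ×ˢ C, f x.1 y.1 * g x.2.1 y.2.1 * h x.2.2 y.2.2
      = (∑ a ∈ A, ∑ a' ∈ A, f a a') * (∑ b ∈ B, ∑ b' ∈ B, g b b')
          * (∑ c ∈ C, ∑ c' ∈ C, h c c') := by
  simp only [sum_product, ← mul_sum, ← sum_mul]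

lemma sum_sum_nonzeroIndicator_sub (I : Finset ℤ) :
    ∑ i ∈ I, ∑ j ∈ I, nonzeroIndicator (i - j) = (#I : ℝ) ^ 2 - #I := by
  have hrow : ∀ i ∈ I, ∑ j ∈ I, nonzeroIndicator (i - j) = #I - 1 := by
    intro i hi
    simp only [nonzeroIndicator, sub_eq_zero, eq_comm (a := i)]
    rw [sum_ite, sum_const_zero, sum_const, filter_ne' I i, card_erase_of_mem hi, nsmul_one,
      zero_add, Nat.cast_sub (card_pos.mpr ⟨i, hi⟩)]
    simp
  rw [sum_congr rfl hrow, sum_const, nsmul_eq_mul]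
  ring

lemma sum_sum_log_dist_ge (I : Finset ℤ) :
    (#I : ℝ) ^ 4 * ∑ i ∈ I, ∑ j ∈ I, log ((i - j : ℤ) : ℝ)
        + log 3 / 2 * ((#I : ℝ) ^ 2 - #I) ^ 3
      ≤ ∑ x ∈ I ×ˢ I ×ˢ I, ∑ y ∈ I ×ˢ I ×ˢ I, log (dist (pt x) (pt y)) := by
  refine le_trans (le_of_eq ?_) (sum_le_sum fun x _ => sum_le_sum fun y _ => log_dist_pt_ge x y)
  set φ : ℤ → ℤ → ℝ := fun i j => log ((i - j : ℤ) : ℝ)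
  have h₁ := sum_sum_mul_mul_of_product I I I φ (fun _ _ => 1) (fun _ _ => 1)
  have h₂ := sum_sum_mul_mul_of_product I I I (fun _ _ => 1) φ (fun _ _ => 1)
  have h₃ := sum_sum_mul_mul_of_product I I I (fun _ _ => 1) (fun _ _ => 1) φ
  have h₄ := sum_sum_mul_mul_of_product I I I (fun i j => nonzeroIndicator (i - j))
    (fun i j => nonzeroIndicator (i - j)) (fun i j => nonzeroIndicator (i - j))
  simp only [mul_one, one_mul, sum_const, nsmul_eq_mul] at h₁ h₂ h₃
  simp only [add_div, sum_add_distrib, ← sum_div, ← mul_sum]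
  rw [h₁, h₂, h₃, h₄, sum_sum_nonzeroIndicator_sub]
  ring

lemma two_nsmul_sum_sym2_filter_not_isDiag {α M : Type*} [DecidableEq α] [AddCommMonoid M]
    (s : Finset α) (g : Sym2 α → M) :
    2 • ∑ p ∈ s.sym2 with ¬p.IsDiag, g p = ∑ z ∈ s.offDiag, g s(z.1, z.2) := by
  change _ = ∑ z ∈ s.offDiag, g (Sym2.mk.uncurry z)
  rw [sum_comp g Sym2.mk.uncurry, ← Sym2.filter_image_mk_not_isDiag, ← sym2_eq_image, smul_sum]
  refine sum_congr rfl fun p hp => ?_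
  induction p using Sym2.ind with
  | _ a b =>
    simp only [mem_filter, mk_mem_sym2_iff, Sym2.mk_isDiag_iff] at hp
    have : {z ∈ s.offDiag | Sym2.mk.uncurry z = s(a, b)} = {(a, b), (b, a)} := by
      ext ⟨u, v⟩
      simp only [mem_filter, mem_offDiag, Function.uncurry_apply_pair, Sym2.eq_iff, mem_insert,
        mem_singleton, Prod.mk.injEq]
      aesop
    rw [this, card_pair (by simpa [eq_comm] using hp.2)]

lemma lift_dist_pt_pos {p : Sym2 (ℤ × ℤ × ℤ)} (hp : ¬p.IsDiag) :
    0 < Sym2.lift ⟨fun x y => dist (pt x) (pt y), fun _ _ => dist_comm _ _⟩ p := by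
  induction p using Sym2.ind with
  | _ x y => exact dist_pos.mpr (pt_injective.ne (by simpa using hp))

lemma pairProd_pos (ℓ : ℕ) : 0 < pairProd ℓ :=
  prod_pos fun _ hp => lift_dist_pt_pos (mem_filter.mp hp).2

lemma two_mul_log_pairProd (ℓ : ℕ) :
    2 * log (pairProd ℓ)
      = ∑ x ∈ latticeCube ℓ, ∑ y ∈ latticeCube ℓ, log (dist (pt x) (pt y)) := by
  rw [pairProd, log_prod fun _ hp => (lift_dist_pt_pos (mem_filter.mp hp).2).ne', two_mul,
    ← two_nsmul, two_nsmul_sum_sym2_filter_not_isDiag (latticeCube ℓ) fun p => log (Sym2.lift _ p)]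
  simp only [Sym2.lift_mk]
  rw [← sum_product', ← diag_union_offDiag, sum_union (disjoint_diag_offDiag _),
    sum_eq_zero (s := (latticeCube ℓ).diag), zero_add]
  · intro z hz
    rw [(mem_diag.mp hz).2, dist_self, log_zero]

lemma log_Q_eq (ℓ : ℕ) :
    log (Q ℓ) = (∑ x ∈ latticeCube ℓ, ∑ y ∈ latticeCube ℓ, log (dist (pt x) (pt y)))
      / ((2 * ℓ + 1 : ℕ) : ℝ) ^ 6 := by
  rw [Q, log_rpow (pairProd_pos ℓ), ← two_mul_log_pairProd]
  push_cast
  ring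

lemma three_mul_log_two_add_le_two_mul_log_three : 3 * log 2 + 1 / 9 ≤ 2 * log 3 := by
  have h := one_sub_inv_le_log_of_pos (by norm_num : (0 : ℝ) < 9 / 8)
  rw [log_div (by norm_num) (by norm_num), show (9 : ℝ) = 3 ^ 2 by norm_num,
    show (8 : ℝ) = 2 ^ 3 by norm_num, log_pow, log_pow] at h
  norm_num at h
  linarith

/-- `4x² - 2x + 2/3` is a polynomial lower bound for `8x³ / (2x + 1)`. -/
lemma log_sub_one_third_le {x : ℝ} (hx : 1 ≤ x) :
    (2 * x + 1) ^ 2 * (log x - 1 / 3)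
      ≤ 2 * (logAntideriv₂ (2 * x + 1 / 2) - logAntideriv₂ (3 / 2)
          - (2 * x - 1) * logAntideriv (1 / 2))
        + log 3 / 2 * (4 * x ^ 2 - 2 * x + 2 / 3) := by
  have hx0 : (0 : ℝ) < x := by linarith
  have hlog2x : log 2 + log x ≤ log (2 * x + 1 / 2) := by
    rw [← log_mul (by norm_num) hx0.ne']
    exact log_le_log (by positivity) (by linarith)
  have hlogx : log x ≤ 3 * log 2 - 1 + x / 8 := by
    have h := log_le_sub_one_of_pos (show (0 : ℝ) < x / 8 by positivity)
    rw [log_div hx0.ne' (by norm_num), show (8 : ℝ) = 2 ^ 3 by norm_num, log_pow] at h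
    push_cast at h
    linarith
  have hlog32 : log (3 / 2) ≤ 5 / 12 := by
    have h := log_le_sub_inv_div_two (show (1 : ℝ) ≤ 3 / 2 by norm_num)
    norm_num at h
    linarith
  have hlog3 : (3 * log 2 + 1 / 9) * (4 * x ^ 2 - 2 * x + 2 / 3)
      ≤ 2 * log 3 * (4 * x ^ 2 - 2 * x + 2 / 3) :=
    mul_le_mul_of_nonneg_right three_mul_log_two_add_le_two_mul_log_three (by nlinarith)
  have hA2 : (2 * x + 1 / 2) ^ 2 / 2 * (log 2 + log x)
      ≤ (2 * x + 1 / 2) ^ 2 / 2 * log (2 * x + 1 / 2) :=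
    mul_le_mul_of_nonneg_left hlog2x (by positivity)
  have hB2 : (2 * x + 3 / 4) * log x ≤ (2 * x + 3 / 4) * (3 * log 2 - 1 + x / 8) :=
    mul_le_mul_of_nonneg_left hlogx (by linarith)
  have hpos : 0 ≤ (7 * x ^ 2 - 7 / 2 * x - 7 / 2) * (log 2 - 0.6931471803) :=
    mul_nonneg (by nlinarith) (by linarith [log_two_gt_d9])
  -- After `hA2` and `hB2` only a quadratic inequality in `x` with coefficients in `log 2`,
  -- `log 3`, `log (3/2)` remains; `hpos` and the square are its certificate.
  unfold logAntideriv₂ logAntideriv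
  rw [show log (1 / 2) = -log 2 by rw [one_div, log_inv]]
  nlinarith [sq_nonneg (x - 5207 / 2000), log_nonneg hx, log_two_lt_d9, log_two_gt_d9]

lemma pow_six_mul_log_sub_one_third_le {x T : ℝ} (hx : 1 ≤ x)
    (hT : 2 * (logAntideriv₂ (2 * x + 1 / 2) - logAntideriv₂ (3 / 2)
      - (2 * x - 1) * logAntideriv (1 / 2)) ≤ T) :
    (2 * x + 1) ^ 6 * (log x - 1 / 3)
      ≤ (2 * x + 1) ^ 4 * T + log 3 / 2 * ((2 * x + 1) ^ 2 - (2 * x + 1)) ^ 3 := by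
  have hpoly : (2 * x + 1) ^ 4 * (4 * x ^ 2 - 2 * x + 2 / 3)
      ≤ ((2 * x + 1) ^ 2 - (2 * x + 1)) ^ 3 := by
    nlinarith [pow_nonneg (by linarith : (0 : ℝ) ≤ 2 * x + 1) 3]
  have hlog3 : 0 < log 3 := log_pos (by norm_num)
  have hN4 : (0 : ℝ) ≤ (2 * x + 1) ^ 4 := by positivity
  nlinarith [mul_le_mul_of_nonneg_left (log_sub_one_third_le hx) hN4,
    mul_le_mul_of_nonneg_left hT hN4,
    mul_le_mul_of_nonneg_left hpoly hlog3.le]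

end LatticeCube

open LatticeCube Finset in
theorem lower_bound (ℓ : ℕ) (hℓ : 1 ≤ ℓ) :
    Real.exp (-1/3) * ℓ ≤ Q ℓ := by
  set N := 2 * ℓ + 1 with hN
  have hx : (1 : ℝ) ≤ ℓ := by exact_mod_cast hℓ
  have hNx : (N : ℝ) = 2 * ℓ + 1 := by push_cast [hN]; ring
  have hcard : #(Icc (1 : ℤ) N) = N := by simp
  have hcube : latticeCube ℓ = Icc (1 : ℤ) N ×ˢ Icc (1 : ℤ) N ×ˢ Icc (1 : ℤ) N := by
    simp [latticeCube, hN]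
  have hsum := sum_sum_log_dist_ge (Icc (1 : ℤ) N)
  rw [hcard, sum_sum_log_sub_Icc_eq_logGapSum] at hsum
  have hgap := logGapSum_ge (by omega : 2 ≤ N)
  rw [hNx, show (2 * ℓ + 1 - 1 / 2 : ℝ) = 2 * ℓ + 1 / 2 by ring,
    show (2 * ℓ + 1 - 2 : ℝ) = 2 * ℓ - 1 by ring] at hgap
  rw [hNx] at hsum
  have hlogQ : Real.log ℓ - 1 / 3 ≤ Real.log (Q ℓ) := by
    rw [log_Q_eq, ← hN, hNx, le_div_iff₀ (by positivity), hcube]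
    linarith [pow_six_mul_log_sub_one_third_le hx hgap]
  have hQ : 0 < Q ℓ := Real.rpow_pos_of_pos (pairProd_pos ℓ) _
  calc Real.exp (-1/3) * ℓ = Real.exp (Real.log ℓ + -1 / 3) := by
        rw [Real.exp_add, Real.exp_log (by linarith), mul_comm]
    _ ≤ Real.exp (Real.log (Q ℓ)) := Real.exp_le_exp.mpr (by linarith)
    _ = Q ℓ := Real.exp_log hQ
end

section
/- Let ℓ ≥ 1 be a natural number and let c = (ℓ+1, ℓ+1, ℓ+1) be the centre point of the lattice cube L_ℓ. For every point j ∈ L_ℓ, the product of the Euclidean distances from the centre to all other lattice points is less than or equal to the product of the Euclidean distances from j to all other lattice points: ∏_{x ∈ L_ℓ, x ≠ c} |c − x| ≤ ∏_{x ∈ L_ℓ, x ≠ j} |j − x|. -/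
open Finset

/-!
Rotating each coordinate cyclically within `{1, …, 2ℓ+1}` is a bijection of `L_ℓ` taking `c` to
`j`. A coordinate difference `y - (ℓ+1)` of a lattice point has absolute value at most `ℓ`, so it is
the representative of least absolute value of its class modulo `2ℓ+1`; the corresponding
difference between `j` and the rotated point lies in the same class and hence is no shorter.
So the rotation matches the factors of the product for `c` with factors of the product for `j`
that are at least as large.
-/

theorem Finset.prod_erase_le_prod_erase_of_bijOn {ι R : Type*} [DecidableEq ι]
    [CommMonoidWithZero R] [Preorder R] [ZeroLEOneClass R] [PosMulMono R]
    {s : Finset ι} {f g : ι → R} {σ : ι → ι} {c : ι} (hσ : Set.BijOn σ s s) (hc : c ∈ s)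
    (hf : ∀ x ∈ s, 0 ≤ f x) (hfg : ∀ x ∈ s, f x ≤ g (σ x)) :
    ∏ x ∈ s.erase c, f x ≤ ∏ x ∈ s.erase (σ c), g x := by
  have hσ' : Set.BijOn σ (s.erase c : Set ι) (s.erase (σ c)) := by
    simpa only [coe_erase] using hσ.sdiff_singleton hc
  calc ∏ x ∈ s.erase c, f x
      ≤ ∏ x ∈ s.erase c, g (σ x) :=
        prod_le_prod (fun x hx => hf x (mem_of_mem_erase hx))
          (fun x hx => hfg x (mem_of_mem_erase hx))
    _ = ∏ x ∈ s.erase (σ c), g x :=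
        prod_nbij σ (fun _ hx => hσ'.mapsTo hx) hσ'.injOn hσ'.surjOn (fun _ _ => rfl)

theorem Int.ModEq.abs_le_abs {n r t : ℤ} (h : t ≡ r [ZMOD n]) (hr : 2 * |r| ≤ n) :
    |r| ≤ |t| := by
  obtain ⟨k, hk⟩ := h.dvd
  rcases eq_or_ne k 0 with rfl | hk0
  · rw [mul_zero, sub_eq_zero] at hk
    rw [hk]
  · have hn : n ≤ |r - t| := by
      rw [hk, abs_mul, abs_of_nonneg (by linarith [abs_nonneg r])]
      exact le_mul_of_one_le_right (by linarith [abs_nonneg r]) (Int.one_le_abs hk0)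
    linarith [abs_sub r t]

/-- Rotation by `k` of the cycle `1, 2, …, n`. -/
def rotIcc (n k y : ℤ) : ℤ := (y - 1 + k) % n + 1

section rotIcc

variable {n k y : ℤ}

theorem rotIcc_mem_Icc (hn : 0 < n) : rotIcc n k y ∈ Set.Icc 1 n := by
  have := Int.emod_nonneg (y - 1 + k) hn.ne'
  have := Int.emod_lt_of_pos (y - 1 + k) hn
  constructor <;> unfold rotIcc <;> omega

theorem rotIcc_modEq : rotIcc n k y ≡ y + k [ZMOD n] := by
  calc rotIcc n k y = (y - 1 + k) % n + 1 := rfl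
    _ ≡ y - 1 + k + 1 [ZMOD n] := (Int.mod_modEq _ _).add_right 1
    _ = y + k := by ring

theorem rotIcc_zero_of_mem (hy : y ∈ Set.Icc 1 n) : rotIcc n 0 y = y := by
  rw [rotIcc, add_zero, Int.emod_eq_of_lt (by linarith [hy.1]) (by linarith [hy.2]),
    sub_add_cancel]

theorem rotIcc_eq_rotIcc_zero : rotIcc n k y = rotIcc n 0 (y + k) := by
  rw [rotIcc, rotIcc, add_zero, add_sub_right_comm]

theorem rotIcc_rotIcc (k' : ℤ) : rotIcc n k' (rotIcc n k y) = rotIcc n (k + k') y := by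
  simp only [rotIcc, add_sub_cancel_right, Int.emod_add_emod, add_assoc]

theorem rotIcc_neg_rotIcc (hy : y ∈ Set.Icc 1 n) : rotIcc n (-k) (rotIcc n k y) = y := by
  rw [rotIcc_rotIcc, add_neg_cancel, rotIcc_zero_of_mem hy]

theorem rotIcc_sub_self {a : ℤ} (m : ℤ) (ha : a ∈ Set.Icc 1 n) : rotIcc n (a - m) m = a := by
  rw [rotIcc_eq_rotIcc_zero, add_sub_cancel, rotIcc_zero_of_mem ha]

theorem rotIcc_bijOn (hn : 0 < n) : Set.BijOn (rotIcc n k) (Set.Icc 1 n) (Set.Icc 1 n) := by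
  refine Set.InvOn.bijOn (f' := rotIcc n (-k)) ⟨fun y hy => rotIcc_neg_rotIcc hy, fun y hy => ?_⟩
    (fun _ _ => rotIcc_mem_Icc hn) (fun _ _ => rotIcc_mem_Icc hn)
  simpa only [neg_neg] using rotIcc_neg_rotIcc (k := -k) hy

theorem abs_sub_le_abs_sub_rotIcc {m a : ℤ} (hy : 2 * |m - y| ≤ n) :
    |m - y| ≤ |a - rotIcc n (a - m) y| := by
  have h := (Int.ModEq.refl a).sub (rotIcc_modEq (n := n) (k := a - m) (y := y))
  rw [show a - (y + (a - m)) = m - y by ring] at h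
  exact h.abs_le_abs hy

end rotIcc

def rotCube (n : ℤ) (k : ℤ × ℤ × ℤ) (x : ℤ × ℤ × ℤ) : ℤ × ℤ × ℤ :=
  (rotIcc n k.1 x.1, rotIcc n k.2.1 x.2.1, rotIcc n k.2.2 x.2.2)

theorem mem_latticeCube {ℓ : ℕ} {x : ℤ × ℤ × ℤ} :
    x ∈ latticeCube ℓ ↔ x.1 ∈ Set.Icc 1 (2 * (ℓ : ℤ) + 1) ∧
      x.2.1 ∈ Set.Icc 1 (2 * (ℓ : ℤ) + 1) ∧ x.2.2 ∈ Set.Icc 1 (2 * (ℓ : ℤ) + 1) := by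
  simp only [latticeCube, mem_product, Finset.mem_Icc, Set.mem_Icc]

theorem bijOn_rotCube_latticeCube (ℓ : ℕ) (k : ℤ × ℤ × ℤ) :
    Set.BijOn (rotCube (2 * ℓ + 1) k) (latticeCube ℓ) (latticeCube ℓ) := by
  have hn : (0 : ℤ) < 2 * ℓ + 1 := by positivity
  simp only [latticeCube, coe_product, coe_Icc]
  exact (rotIcc_bijOn hn).prodMap ((rotIcc_bijOn hn).prodMap (rotIcc_bijOn hn))

theorem dist_pt (a b : ℤ × ℤ × ℤ) : dist (pt a) (pt b) =
    √(((a.1 - b.1) ^ 2 + (a.2.1 - b.2.1) ^ 2 + (a.2.2 - b.2.2) ^ 2 : ℤ) : ℝ) := by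
  simp [pt, EuclideanSpace.dist_eq, Fin.sum_univ_three, Real.dist_eq, sq_abs]

theorem dist_pt_le_dist_pt {a b a' b' : ℤ × ℤ × ℤ} (h₁ : |a.1 - b.1| ≤ |a'.1 - b'.1|)
    (h₂ : |a.2.1 - b.2.1| ≤ |a'.2.1 - b'.2.1|) (h₃ : |a.2.2 - b.2.2| ≤ |a'.2.2 - b'.2.2|) :
    dist (pt a) (pt b) ≤ dist (pt a') (pt b') := by
  rw [dist_pt, dist_pt]
  refine Real.sqrt_le_sqrt (Int.cast_le.mpr ?_)
  exact add_le_add (add_le_add (sq_le_sq.mpr h₁) (sq_le_sq.mpr h₂)) (sq_le_sq.mpr h₃)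

theorem centre_minimizes_distance_product_general (ℓ : ℕ)
    (c : ℤ × ℤ × ℤ) (hc : c = ((ℓ : ℤ) + 1, (ℓ : ℤ) + 1, (ℓ : ℤ) + 1))
    (j : ℤ × ℤ × ℤ) (hj : j ∈ latticeCube ℓ) :
    ∏ x ∈ (latticeCube ℓ).erase c, dist (pt c) (pt x) ≤
      ∏ x ∈ (latticeCube ℓ).erase j, dist (pt j) (pt x) := by
  have hcentre : ∀ y ∈ Set.Icc 1 (2 * (ℓ : ℤ) + 1), 2 * |(ℓ : ℤ) + 1 - y| ≤ 2 * ℓ + 1 :=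
    fun y hy => by
      have : |(ℓ : ℤ) + 1 - y| ≤ ℓ := abs_le.mpr ⟨by linarith [hy.2], by linarith [hy.1]⟩
      omega
  have hcL : c ∈ latticeCube ℓ := by
    simp only [hc, mem_latticeCube, Set.mem_Icc]; omega
  obtain ⟨hj₁, hj₂, hj₃⟩ := mem_latticeCube.mp hj
  have hcj : rotCube (2 * ℓ + 1) (j - c) c = j :=
    Prod.ext (rotIcc_sub_self _ hj₁) (Prod.ext (rotIcc_sub_self _ hj₂) (rotIcc_sub_self _ hj₃))
  calc ∏ x ∈ (latticeCube ℓ).erase c, dist (pt c) (pt x)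
      ≤ ∏ x ∈ (latticeCube ℓ).erase (rotCube (2 * ℓ + 1) (j - c) c), dist (pt j) (pt x) := by
        refine prod_erase_le_prod_erase_of_bijOn (bijOn_rotCube_latticeCube ℓ (j - c)) hcL
          (fun _ _ => dist_nonneg) fun x hx => ?_
        obtain ⟨hx₁, hx₂, hx₃⟩ := mem_latticeCube.mp hx
        rw [hc]
        exact dist_pt_le_dist_pt (abs_sub_le_abs_sub_rotIcc (hcentre _ hx₁))
          (abs_sub_le_abs_sub_rotIcc (hcentre _ hx₂)) (abs_sub_le_abs_sub_rotIcc (hcentre _ hx₃))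
    _ = ∏ x ∈ (latticeCube ℓ).erase j, dist (pt j) (pt x) := by rw [hcj]

theorem centre_minimizes_distance_product (ℓ : ℕ) (hℓ : 1 ≤ ℓ)
    (c : ℤ × ℤ × ℤ) (hc : c = ((ℓ : ℤ) + 1, (ℓ : ℤ) + 1, (ℓ : ℤ) + 1))
    (j : ℤ × ℤ × ℤ) (hj : j ∈ latticeCube ℓ) :
    ∏ x ∈ (latticeCube ℓ).erase c, dist (pt c) (pt x) ≤
      ∏ x ∈ (latticeCube ℓ).erase j, dist (pt j) (pt x) :=
  centre_minimizes_distance_product_general ℓ c hc j hj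
end

section
/- Let q = 2ℓ+1 with ℓ ≥ 1 a natural number, and let i, j be integers with 1 ≤ i, j ≤ 2ℓ+1. Let m = (ℓ+1−j+i) mod' (2ℓ+1), i.e. the unique representative of ℓ+1−j+i modulo 2ℓ+1 lying in {1, …, 2ℓ+1}. Then |m − (ℓ+1)| ≤ |i − j|. -/
/-- `mod' m q`: the unique integer congruent to `m` modulo `q` lying in `{1, 2, …, q}`
(so `mod' q q = q` rather than `0`), for `q ≥ 1`. -/
def mod' (m q : ℤ) : ℤ := (m - 1) % q + 1

theorem one_dimensional_mod_inequality (ℓ : ℕ) (hℓ : 1 ≤ ℓ) (i j : ℤ)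
    (hi : 1 ≤ i ∧ i ≤ 2 * (ℓ : ℤ) + 1) (hj : 1 ≤ j ∧ j ≤ 2 * (ℓ : ℤ) + 1)
    (m : ℤ) (hm : m = mod' ((ℓ : ℤ) + 1 - j + i) (2 * (ℓ : ℤ) + 1)) :
    |m - ((ℓ : ℤ) + 1)| ≤ |i - j| := by
  obtain ⟨hi1, hi2⟩ := hi
  obtain ⟨hj1, hj2⟩ := hj
  have hL : (1:ℤ) ≤ (ℓ:ℤ) := by exact_mod_cast hℓ
  unfold mod' at hm
  set q : ℤ := 2 * (ℓ : ℤ) + 1 with hqdef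
  set t : ℤ := (ℓ : ℤ) + 1 - j + i - 1 with htdef
  have hcase : t % q = t ∨ t % q = t - q ∨ t % q = t + q := by
    rcases le_or_gt 0 t with h0 | h0
    · rcases lt_or_ge t q with h1 | h1
      · left; exact Int.emod_eq_of_lt h0 h1
      · right; left
        have h2 : (t - q) % q = t - q := Int.emod_eq_of_lt (by omega) (by omega)
        calc t % q = (t - q + q * 1) % q := by ring_nf
          _ = (t - q) % q := Int.add_mul_emod_self_left (t - q) q 1
          _ = t - q := h2
    · right; right
      have h2 : (t + q) % q = t + q := Int.emod_eq_of_lt (by omega) (by omega)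
      calc t % q = (t + q * 1) % q := (Int.add_mul_emod_self_left t q 1).symm
        _ = t + q := by rw [← h2]; ring_nf
  have hb : 0 ≤ t % q := Int.emod_nonneg t (by omega)
  have hub : t % q < q := Int.emod_lt_of_pos t (by omega)
  rw [Int.abs_eq_natAbs, Int.abs_eq_natAbs]
  rcases hcase with h | h | h <;> omega
end

section
/- For every natural number ℓ ≥ 1, α(ℓ) ≥ (e^{−1/3}·ℓ)^{(2ℓ+1)³}, where α(ℓ) = ∏_{k=1}^{ℓ} k^{n_k} and n_k = 6(2k+1)² − 12(2k+1) + 8. -/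
/-- `n_k = 6(2k+1)² − 12(2k+1) + 8`, the number of points in the `k`-th centre shell. -/
def nShell (k : ℕ) : ℕ := 6 * (2 * k + 1) ^ 2 - 12 * (2 * k + 1) + 8

/-- `α(ℓ) = ∏_{k=1}^{ℓ} k^{n_k}`. -/
noncomputable def alpha (ℓ : ℕ) : ℝ := ∏ k ∈ Finset.Icc 1 ℓ, (k : ℝ) ^ nShell k

lemma nShell_eq (k : ℕ) (hk : 1 ≤ k) : nShell k = 24 * k ^ 2 + 2 := by
  unfold nShell
  have h1 : 6 * (2 * k + 1) ^ 2 = 24 * k ^ 2 + 24 * k + 6 := by ring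
  have h2 : 1 ≤ k ^ 2 := Nat.one_le_pow _ _ hk
  omega

theorem alpha_lower_bound (ℓ : ℕ) (hℓ : 1 ≤ ℓ) :
    alpha ℓ ≥ (Real.exp (-1/3) * ℓ) ^ ((2 * ℓ + 1) ^ 3) := by
  induction ℓ, hℓ using Nat.le_induction with
  | base =>
      have h1 : alpha 1 = 1 := by simp [alpha]
      rw [h1]
      have ha : Real.exp (-1/3) ≤ 1 := by
        rw [Real.exp_le_one_iff]; norm_num
      have ha0 : 0 ≤ Real.exp (-1/3) := (Real.exp_pos _).le
      calc (Real.exp (-1/3) * (1:ℕ)) ^ ((2*1+1)^3)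
          = Real.exp (-1/3) ^ ((2*1+1)^3) := by norm_num
        _ ≤ 1 := pow_le_one₀ ha0 ha
  | succ ℓ hℓ ih =>
      set a := Real.exp (-1/3) with ha_def
      have ha : 0 < a := Real.exp_pos _
      have hx : (1:ℝ) ≤ (ℓ:ℝ) := by exact_mod_cast hℓ
      have hx0 : (0:ℝ) < (ℓ:ℝ) := by linarith
      set N := (2*ℓ+1)^3 with hN
      set n := nShell (ℓ+1) with hn
      have hNn : (2*(ℓ+1)+1)^3 = N + n := by
        rw [hn, nShell_eq _ (by omega), hN]; ring
      have halpha : alpha (ℓ+1) = alpha ℓ * ((ℓ:ℝ)+1)^n := by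
        unfold alpha
        rw [Finset.prod_Icc_succ_top (by omega : 1 ≤ ℓ + 1)]
        push_cast
        rfl
      have key1 : 3 * N ≤ ℓ * n := by
        rw [hn, nShell_eq _ (by omega), hN]
        nlinarith [hℓ]
      have key1' : (N:ℝ) / (ℓ:ℝ) ≤ (n:ℝ) / 3 := by
        rw [div_le_div_iff₀ hx0 (by norm_num)]
        have : (3:ℝ) * N ≤ (ℓ:ℝ) * n := by exact_mod_cast key1
        linarith
      have hexp : (ℓ:ℝ) + 1 ≤ (ℓ:ℝ) * Real.exp (1/ℓ) := by
        have h1 := Real.add_one_le_exp (1/(ℓ:ℝ))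
        have h2 : (ℓ:ℝ) * (1/ℓ) = 1 := by field_simp
        nlinarith
      have key2 : ((ℓ:ℝ)+1)^N ≤ Real.exp ((n:ℝ)/3) * (ℓ:ℝ)^N := by
        calc ((ℓ:ℝ)+1)^N ≤ ((ℓ:ℝ) * Real.exp (1/ℓ))^N :=
              pow_le_pow_left₀ (by positivity) hexp N
          _ = (ℓ:ℝ)^N * Real.exp ((N:ℝ)/ℓ) := by
              rw [mul_pow, ← Real.exp_nat_mul]
              ring_nf
          _ ≤ (ℓ:ℝ)^N * Real.exp ((n:ℝ)/3) := by
              gcongr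
          _ = Real.exp ((n:ℝ)/3) * (ℓ:ℝ)^N := by ring
      have hone : a^n * Real.exp ((n:ℝ)/3) = 1 := by
        rw [ha_def, ← Real.exp_nat_mul, ← Real.exp_add]
        rw [show (n:ℝ) * (-1/3) + (n:ℝ)/3 = 0 by ring, Real.exp_zero]
      have main : (a * ((ℓ:ℝ)+1))^(N+n) ≤ alpha ℓ * ((ℓ:ℝ)+1)^n := by
        calc (a * ((ℓ:ℝ)+1))^(N+n)
            = a^(N+n) * (((ℓ:ℝ)+1)^N * ((ℓ:ℝ)+1)^n) := by
              rw [mul_pow, pow_add, pow_add]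
          _ ≤ a^(N+n) * ((Real.exp ((n:ℝ)/3) * (ℓ:ℝ)^N) * ((ℓ:ℝ)+1)^n) := by
              gcongr
          _ = (a*(ℓ:ℝ))^N * ((a^n * Real.exp ((n:ℝ)/3)) * ((ℓ:ℝ)+1)^n) := by
              rw [mul_pow, pow_add]; ring
          _ = (a*(ℓ:ℝ))^N * ((ℓ:ℝ)+1)^n := by rw [hone]; ring
          _ ≤ alpha ℓ * ((ℓ:ℝ)+1)^n := by
              gcongr
      rw [ge_iff_le, halpha]
      push_cast
      rw [hNn]
      exact main
end

section
/- For every natural number ℓ ≥ 1, e^{−1/3} ≤ (1 + 1/ℓ)^{−ℓ/3 + (132ℓ² + 72ℓ − 1)/(24ℓ²)}, where the exponent is the real number −(1/3)ℓ + (132ℓ² + 72ℓ − 1)/(24ℓ²). -/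
theorem inductive_step_inequality (ℓ : ℕ) (hℓ : 1 ≤ ℓ) :
    Real.exp (-1/3) ≤
      (1 + 1 / (ℓ : ℝ)) ^
        (-(ℓ : ℝ) / 3 + (132 * (ℓ : ℝ) ^ 2 + 72 * (ℓ : ℝ) - 1) / (24 * (ℓ : ℝ) ^ 2)) := by
  have hl : (1 : ℝ) ≤ (ℓ : ℝ) := by exact_mod_cast hℓ
  have hlpos : (0 : ℝ) < (ℓ : ℝ) := by linarith
  have hbpos : (0 : ℝ) < 1 + 1 / (ℓ : ℝ) := by positivity
  rw [Real.rpow_def_of_pos hbpos]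
  apply Real.exp_le_exp.mpr
  set L := Real.log (1 + 1 / (ℓ : ℝ)) with hL
  have hL0 : 0 ≤ L := Real.log_nonneg (by nlinarith [one_div_pos.mpr hlpos])
  have hL1 : L ≤ 1 / (ℓ : ℝ) := by
    have := Real.log_le_sub_one_of_pos hbpos
    linarith
  have hs : 0 ≤ (132 * (ℓ : ℝ) ^ 2 + 72 * (ℓ : ℝ) - 1) / (24 * (ℓ : ℝ) ^ 2) := by
    apply div_nonneg _ (by positivity)
    nlinarith
  have h1 : -(1/3 : ℝ) ≤ L * (-(ℓ : ℝ) / 3) := by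
    have : L * (ℓ : ℝ) ≤ 1 := by
      calc L * (ℓ : ℝ) ≤ (1 / (ℓ : ℝ)) * (ℓ : ℝ) := by
            exact mul_le_mul_of_nonneg_right hL1 (le_of_lt hlpos)
        _ = 1 := by field_simp
    nlinarith
  have h2 : 0 ≤ L * ((132 * (ℓ : ℝ) ^ 2 + 72 * (ℓ : ℝ) - 1) / (24 * (ℓ : ℝ) ^ 2)) :=
    mul_nonneg hL0 hs
  have := add_le_add h1 h2
  calc (-1/3 : ℝ) = -(1/3 : ℝ) + 0 := by ring
    _ ≤ L * (-(ℓ : ℝ) / 3) + L * ((132 * (ℓ : ℝ) ^ 2 + 72 * (ℓ : ℝ) - 1) / (24 * (ℓ : ℝ) ^ 2)) :=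
        add_le_add h1 h2
    _ = L * (-(ℓ : ℝ) / 3 + (132 * (ℓ : ℝ) ^ 2 + 72 * (ℓ : ℝ) - 1) / (24 * (ℓ : ℝ) ^ 2)) := by ring
end

section
/- Let ℓ ≥ 1 be a natural number, let n = (2ℓ+1)³, let a > 0 and r > 0 be real numbers with 2r < a, and let y₁, …, y_n ∈ ℝ³ be the n points of the scaled lattice cube a·L_ℓ (i.e. the points (i₁a, i₂a, i₃a) with integer 1 ≤ i₁, i₂, i₃ ≤ 2ℓ+1). Define R_eff = (r^n · ∏_{i<j} |y_i − y_j|²)^{1/n²}, the product over all unordered pairs of distinct points. Then e^{−1/3}·(r/a)^{1/n}·ℓ·a ≤ R_eff ≤ 2√3·(r/a)^{1/n}·ℓ·a. -/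
/-!
Write `Q` for the product of `|x - y|` over ordered pairs of distinct points of `L_ℓ`. Pairing
`s(x, y)` with `(x, y)` and `(y, x)` and pulling out the scale `a` gives
`R_eff = (r/a)^{1/n} · a · Q^{1/n²}`, so both bounds are bounds on the `n² - n` factors of `Q`.

Each factor is at most the diagonal `2√3 ℓ`. For the lower bound fix `x ∈ L_ℓ`. Since `L_ℓ` is a
complete residue system modulo `2ℓ + 1` in each coordinate, reducing `y - x` coordinatewise to
its balanced residue is a bijection of `L_ℓ` onto the centred cube `[-ℓ, ℓ]³` that sends `x` to
`0` and does not increase the sup norm. Hence `∏_{y ≠ x} |x - y| ≥ ∏_{z ≠ 0} ‖z‖_∞`. The centred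
cube is a union of shells on which `‖z‖_∞ = k`, and `1 + 1/k ≤ e^{1/k}` bounds the product over
them from below by `(e^{-1/3} ℓ)^n`.
-/

open Finset

theorem Finset.prod_sym2_filter_not_isDiag_sq {α M : Type*} [DecidableEq α] [CommMonoid M]
    (s : Finset α) (f : {f : α → α → M // ∀ x y, f x y = f y x}) :
    ∏ p ∈ s.sym2.filter (fun p => ¬ p.IsDiag), Sym2.lift f p ^ 2 =
      ∏ p ∈ s.offDiag, f.1 p.1 p.2 := by
  symm
  rw [← prod_fiberwise_of_maps_to (g := fun p : α × α => s(p.1, p.2))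
    (t := s.sym2.filter (fun p => ¬ p.IsDiag)) (by aesop)]
  refine prod_congr rfl fun q hq => ?_
  induction q using Sym2.ind with
  | _ x y =>
    simp only [mem_filter, mk_mem_sym2_iff, Sym2.mk_isDiag_iff] at hq
    have hfiber : s.offDiag.filter (fun p => s(p.1, p.2) = s(x, y)) = {(x, y), (y, x)} := by
      ext ⟨u, v⟩
      simp only [mem_filter, mem_offDiag, Sym2.eq_iff, mem_insert, mem_singleton, Prod.mk.injEq]
      aesop
    rw [hfiber, prod_pair (by simpa [eq_comm] using hq.2), Sym2.lift_mk, f.2 y x, sq]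

theorem Finset.prod_offDiag_eq_prod_prod_erase {α M : Type*} [DecidableEq α] [CommMonoid M]
    (s : Finset α) (f : α → α → M) :
    ∏ p ∈ s.offDiag, f p.1 p.2 = ∏ x ∈ s, ∏ y ∈ s.erase x, f x y :=
  prod_finset_product' _ _ _ fun p => by
    rw [mem_offDiag, mem_erase]; tauto

theorem prod_dist_smul {ι 𝕜 E : Type*} [NormedField 𝕜] [SeminormedAddCommGroup E]
    [NormedSpace 𝕜 E] (t : Finset (ι × ι)) (c : 𝕜) (f : ι → E) :
    ∏ p ∈ t, dist (c • f p.1) (c • f p.2) = ‖c‖ ^ #t * ∏ p ∈ t, dist (f p.1) (f p.2) := by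
  simp_rw [dist_smul₀, prod_mul_distrib, prod_const]

lemma pow_mul_pow_sub_mul_rpow_one_div_sq {r a Q : ℝ} (hr : 0 ≤ r) (ha : 0 < a) (hQ : 0 ≤ Q)
    {n : ℕ} (hn : n ≠ 0) :
    (r ^ n * (a ^ (n ^ 2 - n) * Q)) ^ ((1 : ℝ) / (n : ℝ) ^ 2) =
      (r / a) ^ ((1 : ℝ) / n) * a * Q ^ ((1 : ℝ) / (n : ℝ) ^ 2) := by
  have hsplit : r ^ n * (a ^ (n ^ 2 - n) * Q) = (r / a) ^ n * a ^ n ^ 2 * Q := by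
    have : a ^ n ^ 2 = a ^ (n ^ 2 - n) * a ^ n := by
      rw [← pow_add, Nat.sub_add_cancel (Nat.le_self_pow two_ne_zero n)]
    rw [this, div_pow]
    field_simp
  have hexp : (1 : ℝ) / (n : ℝ) ^ 2 = ((n ^ 2 : ℕ) : ℝ)⁻¹ := by push_cast; ring
  have hr_pow : ((r / a) ^ n) ^ ((1 : ℝ) / (n : ℝ) ^ 2) = (r / a) ^ ((1 : ℝ) / n) := by
    rw [← Real.rpow_natCast, ← Real.rpow_mul (by positivity)]
    congr 1
    field_simp
  rw [hsplit, Real.mul_rpow (by positivity) hQ, Real.mul_rpow (by positivity) (by positivity),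
    hr_pow, hexp, Real.pow_rpow_inv_natCast ha.le (by positivity)]

lemma Int.abs_bmod_le_abs (t : ℤ) (m : ℕ) : |t.bmod m| ≤ |t| := by
  rcases Nat.eq_zero_or_pos m with rfl | hm
  · simp
  by_cases ht : -((m : ℤ) / 2) ≤ t ∧ t < ((m : ℤ) + 1) / 2
  · rw [Int.bmod_eq_of_le ht.1 ht.2]
  · have := Int.le_bmod (x := t) hm
    have := Int.bmod_lt (x := t) hm
    rw [abs_eq_max_neg, abs_eq_max_neg]
    omega

lemma image_bmod_sub_Icc (ℓ : ℕ) (i : ℤ) :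
    (Icc 1 (2 * (ℓ : ℤ) + 1)).image (fun j => (j - i).bmod (2 * ℓ + 1)) = Icc (-(ℓ : ℤ)) ℓ := by
  have hm : 0 < 2 * ℓ + 1 := by omega
  refine eq_of_subset_of_card_le (fun z hz => ?_) ?_
  · obtain ⟨j, -, rfl⟩ := mem_image.1 hz
    have := Int.le_bmod (x := j - i) hm
    have := Int.bmod_lt (x := j - i) hm
    rw [mem_Icc]
    omega
  rw [card_image_of_injOn]
  · simp only [Int.card_Icc]; omega
  intro j hj j' hj' h
  simp only [coe_Icc, Set.mem_Icc] at hj hj'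
  have hdvd : ((2 * ℓ + 1 : ℕ) : ℤ) ∣ j - j' := by
    have := dvd_sub (Int.dvd_bmod_sub_self (x := j' - i) (m := 2 * ℓ + 1))
      (Int.dvd_bmod_sub_self (x := j - i))
    rwa [← show (j - i).bmod (2 * ℓ + 1) = (j' - i).bmod (2 * ℓ + 1) from h,
      sub_sub_sub_cancel_left, sub_sub_sub_cancel_right] at this
  have := Int.eq_zero_of_abs_lt_dvd hdvd (by rw [abs_lt]; push_cast; omega)
  omega

-- `|t|` is written `max t (-t)` so that `omega` can use the right-hand side.
lemma norm_intTriple (z : ℤ × ℤ × ℤ) :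
    ‖z‖ = ((max (max z.1 (-z.1)) (max (max z.2.1 (-z.2.1)) (max z.2.2 (-z.2.2))) : ℤ) : ℝ) := by
  simp only [Prod.norm_def, Int.norm_eq_abs, ← abs_eq_max_neg]
  push_cast
  rfl

lemma dist_pt_s14 (x y : ℤ × ℤ × ℤ) : dist (pt x) (pt y) = ‖pt (x - y)‖ := by
  rw [dist_eq_norm]
  congr 1
  ext i
  fin_cases i <;> simp [pt]

lemma norm_le_norm_pt (z : ℤ × ℤ × ℤ) : ‖z‖ ≤ ‖pt z‖ := by
  have h (i : Fin 3) : ‖pt z i‖ ≤ ‖pt z‖ := PiLp.norm_apply_le (pt z) i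
  simpa [pt, Prod.norm_def, Int.norm_eq_abs] using max_le (h 0) (max_le (h 1) (h 2))

lemma norm_pt_le (z : ℤ × ℤ × ℤ) : ‖pt z‖ ≤ Real.sqrt 3 * ‖z‖ := by
  have h (i : Fin 3) : ‖pt z i‖ ≤ ‖z‖ := by
    fin_cases i <;> simp [pt, Prod.norm_def, Int.norm_eq_abs]
  rw [EuclideanSpace.norm_eq, ← Real.sqrt_sq (norm_nonneg z), ← Real.sqrt_mul (by norm_num)]
  gcongr
  calc ∑ i, ‖pt z i‖ ^ 2 ≤ ∑ _i : Fin 3, ‖z‖ ^ 2 := by gcongr with i; exact h i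
    _ = 3 * ‖z‖ ^ 2 := by simp

lemma card_latticeCube (ℓ : ℕ) : #(latticeCube ℓ) = (2 * ℓ + 1) ^ 3 := by
  have h : #(Icc (1 : ℤ) (2 * ℓ + 1)) = 2 * ℓ + 1 := by rw [Int.card_Icc]; omega
  rw [latticeCube, card_product, card_product, h]
  ring

lemma norm_sub_le_of_mem_latticeCube {ℓ : ℕ} {x y : ℤ × ℤ × ℤ} (hx : x ∈ latticeCube ℓ)
    (hy : y ∈ latticeCube ℓ) : ‖x - y‖ ≤ 2 * ℓ := by
  simp only [latticeCube, mem_product, mem_Icc] at hx hy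
  rw [norm_intTriple]
  exact_mod_cast (by simp only [Prod.fst_sub, Prod.snd_sub]; omega : _ ≤ 2 * (ℓ : ℤ))

lemma dist_pt_le_of_mem_latticeCube {ℓ : ℕ} {x y : ℤ × ℤ × ℤ} (hx : x ∈ latticeCube ℓ)
    (hy : y ∈ latticeCube ℓ) : dist (pt x) (pt y) ≤ 2 * Real.sqrt 3 * ℓ := by
  rw [dist_pt_s14]
  calc ‖pt (x - y)‖ ≤ Real.sqrt 3 * ‖x - y‖ := norm_pt_le _
    _ ≤ Real.sqrt 3 * (2 * ℓ) := by gcongr; exact norm_sub_le_of_mem_latticeCube hx hy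
    _ = 2 * Real.sqrt 3 * ℓ := by ring

-- As `‖·‖` on `ℤ × ℤ × ℤ` is the sup norm, `centeredCube k` is the closed ball of radius `k`.
noncomputable def centeredCube (k : ℕ) : Finset (ℤ × ℤ × ℤ) :=
  Icc (-(k : ℤ)) k ×ˢ Icc (-(k : ℤ)) k ×ˢ Icc (-(k : ℤ)) k

lemma card_centeredCube (k : ℕ) : #(centeredCube k) = (2 * k + 1) ^ 3 := by
  have h : #(Icc (-(k : ℤ)) k) = 2 * k + 1 := by rw [Int.card_Icc]; omega
  rw [centeredCube, card_product, card_product, h]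
  ring

lemma centeredCube_zero : centeredCube 0 = {0} := by
  simp [centeredCube]

lemma centeredCube_mono {k k' : ℕ} (h : k ≤ k') : centeredCube k ⊆ centeredCube k' := by
  unfold centeredCube
  have : Icc (-(k : ℤ)) k ⊆ Icc (-(k' : ℤ)) k' := Icc_subset_Icc (by omega) (by omega)
  gcongr

lemma norm_eq_of_mem_centeredCube_succ {k : ℕ} {z : ℤ × ℤ × ℤ} (h : z ∈ centeredCube (k + 1))
    (h' : z ∉ centeredCube k) : ‖z‖ = k + 1 := by
  simp only [centeredCube, mem_product, mem_Icc] at h h'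
  rw [norm_intTriple]
  exact_mod_cast (by omega : _ = ((k + 1 : ℕ) : ℤ))

lemma prod_norm_centeredCube_succ (k : ℕ) :
    ∏ z ∈ (centeredCube (k + 1)).erase 0, ‖z‖ =
      (∏ z ∈ (centeredCube k).erase 0, ‖z‖) *
        ((k : ℝ) + 1) ^ ((2 * k + 3) ^ 3 - (2 * k + 1) ^ 3) := by
  have hsub : (centeredCube k).erase 0 ⊆ (centeredCube (k + 1)).erase 0 :=
    erase_subset_erase _ (centeredCube_mono k.le_succ)
  have h0 : (0 : ℤ × ℤ × ℤ) ∈ centeredCube k := by simp [centeredCube]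
  have hshell : (centeredCube (k + 1)).erase 0 \ (centeredCube k).erase 0 =
      centeredCube (k + 1) \ centeredCube k := by
    ext z; by_cases hz : z = 0 <;> simp [hz, h0]
  have hnorm : ∀ z ∈ centeredCube (k + 1) \ centeredCube k, ‖z‖ = (k : ℝ) + 1 := fun z hz =>
    norm_eq_of_mem_centeredCube_succ (mem_sdiff.1 hz).1 (mem_sdiff.1 hz).2
  rw [← prod_sdiff hsub, hshell, mul_comm, prod_congr rfl hnorm, prod_const,
    card_sdiff_of_subset (centeredCube_mono k.le_succ), card_centeredCube, card_centeredCube,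
    show 2 * (k + 1) + 1 = 2 * k + 3 by ring]

lemma succ_pow_le_exp_mul_pow (k : ℕ) (hk : 1 ≤ k) :
    ((k : ℝ) + 1) ^ (2 * k + 1) ^ 3 ≤
      Real.exp (((2 * k + 3) ^ 3 - (2 * k + 1) ^ 3 : ℕ) / 3) * (k : ℝ) ^ (2 * k + 1) ^ 3 := by
  have hk' : (1 : ℝ) ≤ k := by exact_mod_cast hk
  have hcast : (((2 * k + 3) ^ 3 - (2 * k + 1) ^ 3 : ℕ) : ℝ) =
      (2 * k + 3) ^ 3 - (2 * k + 1) ^ 3 := by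
    rw [Nat.cast_sub (by gcongr; omega)]; push_cast; ring
  calc ((k : ℝ) + 1) ^ (2 * k + 1) ^ 3 = (1 + 1 / k) ^ (2 * k + 1) ^ 3 * k ^ (2 * k + 1) ^ 3 := by
        rw [← mul_pow]; congr 1; field_simp
    _ ≤ Real.exp (1 / k) ^ (2 * k + 1) ^ 3 * k ^ (2 * k + 1) ^ 3 := by
        gcongr
        linarith [Real.add_one_le_exp (1 / (k : ℝ))]
    _ ≤ _ := by
        rw [← Real.exp_nat_mul, hcast]
        gcongr
        push_cast
        rw [mul_one_div, div_le_div_iff₀ (by positivity) (by norm_num)]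
        nlinarith

lemma pow_le_prod_norm_centeredCube (ℓ : ℕ) :
    (Real.exp (-1 / 3) * ℓ) ^ (2 * ℓ + 1) ^ 3 ≤ ∏ z ∈ (centeredCube ℓ).erase 0, ‖z‖ := by
  induction ℓ with
  | zero => simpa using prod_nonneg fun z _ => norm_nonneg z
  | succ k ih =>
    rw [prod_norm_centeredCube_succ]
    rcases Nat.eq_zero_or_pos k with rfl | hk
    · simp only [centeredCube_zero, erase_singleton, prod_empty]
      norm_num
      exact pow_le_one₀ (Real.exp_nonneg _) (Real.exp_le_one_iff.2 (by norm_num))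
    have hus : (2 * (k + 1) + 1) ^ 3 = (2 * k + 1) ^ 3 + ((2 * k + 3) ^ 3 - (2 * k + 1) ^ 3) := by
      have : (2 * k + 1) ^ 3 ≤ (2 * k + 3) ^ 3 := Nat.pow_le_pow_left (by omega) 3
      rw [show 2 * (k + 1) + 1 = 2 * k + 3 by ring]
      omega
    set u := (2 * k + 1) ^ 3
    set s := (2 * k + 3) ^ 3 - u
    have hexp : Real.exp (-1 / 3) ^ (u + s) * Real.exp (s / 3) = Real.exp (-1 / 3) ^ u := by
      rw [← Real.exp_nat_mul, ← Real.exp_nat_mul, ← Real.exp_add]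
      push_cast; ring_nf
    calc (Real.exp (-1 / 3) * ((k + 1 : ℕ) : ℝ)) ^ (2 * (k + 1) + 1) ^ 3
        = Real.exp (-1 / 3) ^ (u + s) * ((k : ℝ) + 1) ^ u * ((k : ℝ) + 1) ^ s := by
          rw [hus, mul_pow, mul_assoc, ← pow_add]; push_cast; ring
      _ ≤ Real.exp (-1 / 3) ^ (u + s) * (Real.exp (s / 3) * (k : ℝ) ^ u) * ((k : ℝ) + 1) ^ s := by
          gcongr; exact succ_pow_le_exp_mul_pow k hk
      _ = (Real.exp (-1 / 3) * k) ^ u * ((k : ℝ) + 1) ^ s := by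
          rw [mul_pow, ← hexp]; ring
      _ ≤ _ := by gcongr

def centeredResidue (ℓ : ℕ) (x : ℤ × ℤ × ℤ) : ℤ × ℤ × ℤ → ℤ × ℤ × ℤ :=
  Prod.map (fun t => (t - x.1).bmod (2 * ℓ + 1))
    (Prod.map (fun t => (t - x.2.1).bmod (2 * ℓ + 1)) (fun t => (t - x.2.2).bmod (2 * ℓ + 1)))

lemma image_centeredResidue_latticeCube (ℓ : ℕ) (x : ℤ × ℤ × ℤ) :
    (latticeCube ℓ).image (centeredResidue ℓ x) = centeredCube ℓ := by
  rw [latticeCube, centeredResidue, prodMap_image_product, prodMap_image_product,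
    image_bmod_sub_Icc, image_bmod_sub_Icc, image_bmod_sub_Icc, centeredCube]

lemma injOn_centeredResidue (ℓ : ℕ) (x : ℤ × ℤ × ℤ) :
    Set.InjOn (centeredResidue ℓ x) (latticeCube ℓ) :=
  injOn_of_card_image_eq <| by
    rw [image_centeredResidue_latticeCube, card_centeredCube, card_latticeCube]

lemma centeredResidue_self (ℓ : ℕ) (x : ℤ × ℤ × ℤ) : centeredResidue ℓ x x = 0 := by
  ext <;> simp [centeredResidue]

lemma norm_centeredResidue_le (ℓ : ℕ) (x j : ℤ × ℤ × ℤ) :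
    ‖centeredResidue ℓ x j‖ ≤ ‖j - x‖ := by
  simp only [centeredResidue, Prod.norm_def, Prod.map_fst, Prod.map_snd, Prod.fst_sub,
    Prod.snd_sub, Int.norm_eq_abs, ← Int.cast_abs]
  have h := fun t : ℤ => (Int.cast_le (R := ℝ)).2 (Int.abs_bmod_le_abs t (2 * ℓ + 1))
  exact max_le_max (h _) (max_le_max (h _) (h _))

lemma prod_norm_centeredCube_le_prod_dist {ℓ : ℕ} {x : ℤ × ℤ × ℤ} (hx : x ∈ latticeCube ℓ) :
    ∏ z ∈ (centeredCube ℓ).erase 0, ‖z‖ ≤ ∏ y ∈ (latticeCube ℓ).erase x, dist (pt x) (pt y) := by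
  have hinj := injOn_centeredResidue ℓ x
  have hbij : ∏ y ∈ (latticeCube ℓ).erase x, ‖centeredResidue ℓ x y‖ =
      ∏ z ∈ (centeredCube ℓ).erase 0, ‖z‖ := by
    refine prod_nbij (centeredResidue ℓ x) (fun y hy => ?_) ?_ (fun z hz => ?_) fun _ _ => rfl
    · obtain ⟨hyx, hy⟩ := mem_erase.1 hy
      rw [mem_erase, ← image_centeredResidue_latticeCube ℓ x, ← centeredResidue_self ℓ x]
      exact ⟨fun h => hyx (hinj hy hx h), mem_image_of_mem _ hy⟩
    · exact hinj.mono fun y hy => (mem_erase.1 hy).2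
    · obtain ⟨hz0, hz⟩ := mem_erase.1 hz
      rw [← image_centeredResidue_latticeCube ℓ x] at hz
      obtain ⟨y, hy, rfl⟩ := mem_image.1 hz
      refine ⟨y, mem_erase.2 ⟨fun h => hz0 ?_, hy⟩, rfl⟩
      rw [h, centeredResidue_self]
  rw [← hbij]
  refine prod_le_prod (fun _ _ => norm_nonneg _) fun y _ => ?_
  rw [dist_pt_s14]
  exact (norm_centeredResidue_le ℓ x y).trans ((norm_sub_rev y x).trans_le (norm_le_norm_pt _))

lemma pow_le_prod_offDiag_dist (ℓ : ℕ) :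
    (Real.exp (-1 / 3) * ℓ) ^ ((2 * ℓ + 1) ^ 3) ^ 2 ≤
      ∏ p ∈ (latticeCube ℓ).offDiag, dist (pt p.1) (pt p.2) := by
  calc (Real.exp (-1 / 3) * ℓ) ^ ((2 * ℓ + 1) ^ 3) ^ 2
      = ∏ _x ∈ latticeCube ℓ, (Real.exp (-1 / 3) * ℓ) ^ (2 * ℓ + 1) ^ 3 := by
        rw [prod_const, card_latticeCube, sq, pow_mul]
    _ ≤ ∏ x ∈ latticeCube ℓ, ∏ y ∈ (latticeCube ℓ).erase x, dist (pt x) (pt y) :=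
        prod_le_prod (fun _ _ => by positivity) fun _ hx =>
          (pow_le_prod_norm_centeredCube ℓ).trans (prod_norm_centeredCube_le_prod_dist hx)
    _ = _ := (prod_offDiag_eq_prod_prod_erase _ fun x y => dist (pt x) (pt y)).symm

lemma prod_offDiag_dist_le_pow {ℓ : ℕ} (hℓ : 1 ≤ ℓ) :
    ∏ p ∈ (latticeCube ℓ).offDiag, dist (pt p.1) (pt p.2) ≤
      (2 * Real.sqrt 3 * ℓ) ^ ((2 * ℓ + 1) ^ 3) ^ 2 := by
  have h1 : (1 : ℝ) ≤ 2 * Real.sqrt 3 * ℓ := by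
    have : (1 : ℝ) ≤ Real.sqrt 3 := Real.one_le_sqrt.2 (by norm_num)
    have : (1 : ℝ) ≤ ℓ := by exact_mod_cast hℓ
    nlinarith
  calc ∏ p ∈ (latticeCube ℓ).offDiag, dist (pt p.1) (pt p.2)
      ≤ ∏ _p ∈ (latticeCube ℓ).offDiag, 2 * Real.sqrt 3 * ℓ :=
        prod_le_prod (fun _ _ => dist_nonneg) fun p hp =>
          dist_pt_le_of_mem_latticeCube (mem_offDiag.1 hp).1 (mem_offDiag.1 hp).2.1
    _ ≤ _ := by
        rw [prod_const]
        refine pow_le_pow_right₀ h1 ?_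
        rw [offDiag_card, card_latticeCube, sq]
        exact Nat.sub_le _ _

theorem effective_radius_bounds_cubical_lump_general (ℓ : ℕ) (hℓ : 1 ≤ ℓ)
    (a r : ℝ) (ha : 0 < a) (hr : 0 < r)
    (n : ℕ) (hn : n = (2 * ℓ + 1) ^ 3) (Reff : ℝ)
    (hReff : Reff =
      (r ^ n *
          ∏ p ∈ (latticeCube ℓ).sym2.filter (fun p => ¬ p.IsDiag),
            (Sym2.lift ⟨fun x y => dist (a • pt x) (a • pt y),
              fun _ _ => dist_comm _ _⟩ p) ^ 2) ^
        ((1 : ℝ) / (n : ℝ) ^ 2)) :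
    Real.exp (-1/3) * (r / a) ^ ((1 : ℝ) / (n : ℝ)) * ℓ * a ≤ Reff ∧
      Reff ≤ 2 * Real.sqrt 3 * (r / a) ^ ((1 : ℝ) / (n : ℝ)) * ℓ * a := by
  set Q := ∏ p ∈ (latticeCube ℓ).offDiag, dist (pt p.1) (pt p.2)
  have hn0 : n ≠ 0 := by rw [hn]; positivity
  have hprod : ∏ p ∈ (latticeCube ℓ).sym2.filter (fun p => ¬ p.IsDiag),
      (Sym2.lift ⟨fun x y => dist (a • pt x) (a • pt y), fun _ _ => dist_comm _ _⟩ p) ^ 2 =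
        a ^ (n ^ 2 - n) * Q := by
    rw [prod_sym2_filter_not_isDiag_sq, prod_dist_smul, offDiag_card, card_latticeCube,
      Real.norm_of_nonneg ha.le, hn, sq]
  have hQ : 0 ≤ Q := prod_nonneg fun _ _ => dist_nonneg
  have hexp : (1 : ℝ) / (n : ℝ) ^ 2 = ((n ^ 2 : ℕ) : ℝ)⁻¹ := by push_cast; ring
  have hlow : Real.exp (-1 / 3) * ℓ ≤ Q ^ ((1 : ℝ) / (n : ℝ) ^ 2) := by
    rw [hexp, ← Real.pow_rpow_inv_natCast (by positivity : 0 ≤ Real.exp (-1 / 3) * ℓ)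
      (pow_ne_zero 2 hn0)]
    gcongr
    exact hn ▸ pow_le_prod_offDiag_dist ℓ
  have hup : Q ^ ((1 : ℝ) / (n : ℝ) ^ 2) ≤ 2 * Real.sqrt 3 * ℓ := by
    rw [hexp, ← Real.pow_rpow_inv_natCast (by positivity : 0 ≤ 2 * Real.sqrt 3 * ℓ)
      (pow_ne_zero 2 hn0)]
    gcongr
    exact hn ▸ prod_offDiag_dist_le_pow hℓ
  rw [hReff, hprod, pow_mul_pow_sub_mul_rpow_one_div_sq hr.le ha hQ hn0]
  constructor
  · calc Real.exp (-1 / 3) * (r / a) ^ ((1 : ℝ) / n) * ℓ * a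
        = (r / a) ^ ((1 : ℝ) / n) * a * (Real.exp (-1 / 3) * ℓ) := by ring
      _ ≤ _ := by gcongr
  · calc (r / a) ^ ((1 : ℝ) / n) * a * Q ^ ((1 : ℝ) / (n : ℝ) ^ 2)
        ≤ (r / a) ^ ((1 : ℝ) / n) * a * (2 * Real.sqrt 3 * ℓ) := by gcongr
      _ = _ := by ring

theorem effective_radius_bounds_cubical_lump (ℓ : ℕ) (hℓ : 1 ≤ ℓ)
    (a r : ℝ) (ha : 0 < a) (hr : 0 < r) (h2r : 2 * r < a)
    (n : ℕ) (hn : n = (2 * ℓ + 1) ^ 3) (Reff : ℝ)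
    (hReff : Reff =
      (r ^ n *
          ∏ p ∈ (latticeCube ℓ).sym2.filter (fun p => ¬ p.IsDiag),
            (Sym2.lift ⟨fun x y => dist (a • pt x) (a • pt y),
              fun _ _ => dist_comm _ _⟩ p) ^ 2) ^
        ((1 : ℝ) / (n : ℝ) ^ 2)) :
    Real.exp (-1/3) * (r / a) ^ ((1 : ℝ) / (n : ℝ)) * ℓ * a ≤ Reff ∧
      Reff ≤ 2 * Real.sqrt 3 * (r / a) ^ ((1 : ℝ) / (n : ℝ)) * ℓ * a :=
  effective_radius_bounds_cubical_lump_general ℓ hℓ a r ha hr n hn Reff hReff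
end

section
/- Let N ≥ 1 and n ≥ 1 be natural numbers, let m > 0, r > 0 be real numbers, and set M = n·m. Let x₁, …, x_N, x₁′, …, x_N′ ∈ ℝ³ be 2N pairwise distinct points, and let y₁, …, y_n ∈ ℝ³ be n pairwise distinct points. Define R_eff = (r^n ∏_{i<j} |y_i − y_j|²)^{1/n²}. Define D(I,J) = |x_I − x_J| for I ≠ J and D(I,I) = R_eff, and similarly D′(I,J) = |x_I′ − x_J′| for I ≠ J and D′(I,I) = R_eff. Likewise define d(i,j) = |y_i − y_j| for i ≠ j and d(i,i) = r. Then ∏_{I=1}^{N} ∏_{J=1}^{N} ∏_{i=1}^{n} ∏_{j=1}^{n} ( |x_I′ − x_J| · |x_I − x_J′| / (e(I,J,i,j) · e′(I,J,i,j)) )^{−12m²} = ∏_{I=1}^{N} ∏_{J=1}^{N} ( |x_I′ − x_J| · |x_I − x_J′| / (D(I,J) · D′(I,J)) )^{−12M²}, where e(I,J,i,j) = |x_I − x_J| if I ≠ J and e(I,J,i,j) = d(i,j) if I = J, and e′(I,J,i,j) = |x_I′ − x_J′| if I ≠ J and e′(I,J,i,j) = d(i,j) if I = J. -/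
open Finset

private lemma rpow_nat_mul {z : ℝ} (hz : 0 ≤ z) (c : ℝ) (k : ℕ) :
    (z ^ c) ^ k = z ^ ((k : ℝ) * c) := by
  rw [← Real.rpow_natCast (z ^ c) k, ← Real.rpow_mul hz, mul_comm]

private lemma pow_rpow_eq {z : ℝ} (hz : 0 ≤ z) (c : ℝ) (k : ℕ) :
    ((z ^ k) ^ c : ℝ) = z ^ ((k : ℝ) * c) := by
  rw [← Real.rpow_natCast z k, ← Real.rpow_mul hz]

theorem grainy_multiplicative_factor_identity (N n : ℕ) (hN : 1 ≤ N) (hn : 1 ≤ n)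
    (m r M : ℝ) (hm : 0 < m) (hr : 0 < r) (hM : M = n * m)
    (x x' : Fin N → EuclideanSpace ℝ (Fin 3))
    (hxx' : Function.Injective (Sum.elim x x' : Fin N ⊕ Fin N → EuclideanSpace ℝ (Fin 3)))
    (y : Fin n → EuclideanSpace ℝ (Fin 3)) (hy : Function.Injective y)
    (Reff : ℝ)
    (hReff : Reff =
      (r ^ n * ∏ p ∈ (Finset.univ : Finset (Fin n)).offDiag, dist (y p.1) (y p.2)) ^
        ((1 : ℝ) / (n : ℝ) ^ 2))
    (D D' : Fin N → Fin N → ℝ) (d : Fin n → Fin n → ℝ)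
    (hD : ∀ I J, D I J = if I = J then Reff else dist (x I) (x J))
    (hD' : ∀ I J, D' I J = if I = J then Reff else dist (x' I) (x' J))
    (hd : ∀ i j, d i j = if i = j then r else dist (y i) (y j))
    (e e' : Fin N → Fin N → Fin n → Fin n → ℝ)
    (he : ∀ I J i j, e I J i j = if I = J then d i j else dist (x I) (x J))
    (he' : ∀ I J i j, e' I J i j = if I = J then d i j else dist (x' I) (x' J)) :
    (∏ I, ∏ J, ∏ i, ∏ j,
        (dist (x' I) (x J) * dist (x I) (x' J) / (e I J i j * e' I J i j)) ^
          (-(12 : ℝ) * m ^ 2)) =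
      ∏ I, ∏ J,
        (dist (x' I) (x J) * dist (x I) (x' J) / (D I J * D' I J)) ^
          (-(12 : ℝ) * M ^ 2) := by
  set c : ℝ := -(12 : ℝ) * m ^ 2 with hc
  -- positivity of distances
  have hy' : ∀ i j : Fin n, i ≠ j → 0 < dist (y i) (y j) := fun i j hij =>
    dist_pos.mpr fun h => hij (hy h)
  have hd_pos : ∀ i j, 0 < d i j := by
    intro i j; rw [hd]
    split
    · exact hr
    · exact hy' i j (by assumption)
  have hP : 0 < r ^ n * ∏ p ∈ (univ : Finset (Fin n)).offDiag, dist (y p.1) (y p.2) :=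
    mul_pos (pow_pos hr n)
      (Finset.prod_pos fun p hp => hy' p.1 p.2 (Finset.mem_offDiag.mp hp).2.2)
  have hReff_pos : 0 < Reff := by rw [hReff]; exact Real.rpow_pos_of_pos hP _
  have hn0 : (n : ℝ) ≠ 0 := Nat.cast_ne_zero.mpr (by omega)
  -- Reff ^ (n*n) equals r^n * offDiag product
  have hReffpow : Reff ^ (n * n : ℕ) =
      r ^ n * ∏ p ∈ (univ : Finset (Fin n)).offDiag, dist (y p.1) (y p.2) := by
    rw [← Real.rpow_natCast Reff (n * n), hReff, ← Real.rpow_mul hP.le]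
    have : (1 : ℝ) / (n : ℝ) ^ 2 * ((n * n : ℕ) : ℝ) = 1 := by
      push_cast; field_simp
    rw [this, Real.rpow_one]
  -- the double product of d equals Reff^(n*n)
  have hdprod : (∏ i, ∏ j, d i j) = Reff ^ (n * n : ℕ) := by
    rw [hReffpow, ← Finset.prod_product']
    rw [show (univ ×ˢ univ : Finset (Fin n × Fin n)) = univ.diag ∪ univ.offDiag from
      (Finset.diag_union_offDiag _).symm,
      Finset.prod_union (Finset.disjoint_diag_offDiag _)]
    congr 1
    · rw [Finset.prod_congr rfl (fun p hp => ?_), Finset.prod_const, Finset.diag_card,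
        Finset.card_univ, Fintype.card_fin]
      rw [hd, if_pos (Finset.mem_diag.mp hp).2]
    · exact Finset.prod_congr rfl fun p hp => by
        rw [hd, if_neg (Finset.mem_offDiag.mp hp).2.2]
  -- exponent identity
  have hexp : ((n * n : ℕ) : ℝ) * c = -(12 : ℝ) * M ^ 2 := by
    subst hM; rw [hc]; push_cast; ring
  refine Finset.prod_congr rfl fun I _ => Finset.prod_congr rfl fun J _ => ?_
  have hA : 0 < dist (x' I) (x J) * dist (x I) (x' J) := by
    have h1 : x' I ≠ x J := fun h => by
      simpa using hxx' (a₁ := Sum.inr I) (a₂ := Sum.inl J) (by simpa using h)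
    have h2 : x I ≠ x' J := fun h => by
      simpa using hxx' (a₁ := Sum.inl I) (a₂ := Sum.inr J) (by simpa using h)
    exact mul_pos (dist_pos.mpr h1) (dist_pos.mpr h2)
  by_cases hIJ : I = J
  · -- coincident lumps
    subst hIJ
    simp only [he, he', hD, hD', if_pos rfl]
    have hbase : ∀ i j : Fin n,
        0 ≤ dist (x' I) (x I) * dist (x I) (x' I) / (d i j * d i j) := fun i j =>
      div_nonneg hA.le (mul_pos (hd_pos i j) (hd_pos i j)).le
    calc (∏ i, ∏ j,
          (dist (x' I) (x I) * dist (x I) (x' I) / (d i j * d i j)) ^ c)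
        = (∏ i, ∏ j, dist (x' I) (x I) * dist (x I) (x' I) / (d i j * d i j)) ^ c := by
          rw [← Real.finset_prod_rpow _ _ (fun i _ => Finset.prod_nonneg fun j _ => hbase i j) c]
          exact Finset.prod_congr rfl fun i _ =>
            Real.finset_prod_rpow _ _ (fun j _ => hbase i j) c
      _ = ((dist (x' I) (x I) * dist (x I) (x' I)) ^ (n * n : ℕ) /
            ((∏ i, ∏ j, d i j) * (∏ i, ∏ j, d i j))) ^ c := by
          congr 1
          simp only [Finset.prod_div_distrib, Finset.prod_mul_distrib, Finset.prod_const,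
            Finset.card_univ, Fintype.card_fin, ← pow_mul]
          rw [← mul_pow]
      _ = ((dist (x' I) (x I) * dist (x I) (x' I) / (Reff * Reff)) ^ (n * n : ℕ)) ^ c := by
          rw [hdprod, div_pow, mul_pow, mul_pow]
      _ = (dist (x' I) (x I) * dist (x I) (x' I) / (Reff * Reff)) ^ (-(12 : ℝ) * M ^ 2) := by
          rw [pow_rpow_eq (div_nonneg hA.le (mul_pos hReff_pos hReff_pos).le), hexp]
  · -- distinct lumps
    simp only [he, he', hD, hD', if_neg hIJ]
    have hb : 0 ≤ dist (x' I) (x J) * dist (x I) (x' J) /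
        (dist (x I) (x J) * dist (x' I) (x' J)) :=
      div_nonneg hA.le (mul_nonneg dist_nonneg dist_nonneg)
    rw [Finset.prod_const, Finset.prod_const, Finset.card_univ, Fintype.card_fin,
      ← pow_mul, rpow_nat_mul hb c (n * n), hexp]
end
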